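/- Suppose R is a field, let V be an A-module with H^1(Γ,V) = 0, and let q ≥ 1 with N = dim_R J_q/J_{q+1}. Then there is a short exact sequence 0 → H_q^0(Γ,Σ,V) → H_{q+1}^0(Γ,Σ,V) → H^0(Γ,V)^N → 0. Concretely: the annihilator submodule Ann(J_q,V) = {v ∈ V : J_q·v = 0} is contained in Ann(J_{q+1},V), and the quotient Ann(J_{q+1},V)/Ann(J_q,V) is isomorphic to the module of all maps from an R-basis of J_q/J_{q+1} to the fixed module V^Γ. -/

import Mathlib

open CategoryTheory

noncomputable section

variable (R : Type) [CommRing R] (Γ : Type) [Group Γ]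

/-- The augmentation map of the group algebra `A = R[Γ]`, sending each `γ ∈ Γ` to `1`. -/
def aug : MonoidAlgebra R Γ →ₐ[R] R := MonoidAlgebra.lift (R := R) (M := Γ) (A := R) 1

/-- The augmentation ideal `I = ker(aug) ⊆ A`. -/
def Iaug : Ideal (MonoidAlgebra R Γ) := RingHom.ker (aug R Γ).toRingHom

/-- `I` as an `R`-submodule of `A` (so that the powers `I^q` make sense). -/
def IaugR : Submodule R (MonoidAlgebra R Γ) := Submodule.restrictScalars R (Iaug R Γ)

/-- The augmentation ideal of `R[Σ]` viewed inside `A`: the `R`-span of `σ - 1`, `σ ∈ Σ`. -/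
def ISig (Sg : Subgroup Γ) : Submodule R (MonoidAlgebra R Γ) :=
  Submodule.span R {x | ∃ σ ∈ Sg, x = MonoidAlgebra.of R Γ σ - 1}

/-- The left ideal `A·I_Σ` generated by `I_Σ`. -/
def AISig (Sg : Subgroup Γ) : Ideal (MonoidAlgebra R Γ) :=
  Ideal.span (ISig R Γ Sg : Set (MonoidAlgebra R Γ))

/-- `J_q = I^q + A·I_Σ`. -/
def J (Sg : Subgroup Γ) (q : ℕ) : Ideal (MonoidAlgebra R Γ) :=
  Ideal.span ((IaugR R Γ ^ q : Submodule R (MonoidAlgebra R Γ)) : Set (MonoidAlgebra R Γ))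
    ⊔ AISig R Γ Sg

/-- `Ext_A^p(X, V)` as an abelian group (`ℤ`-module). -/
abbrev ExtG (p : ℕ) (X V : ModuleCat (MonoidAlgebra R Γ)) : Type :=
  ((Ext ℤ (ModuleCat (MonoidAlgebra R Γ)) p).obj (Opposite.op X)).obj V

/-- Ordinary group cohomology `H^p(Γ, V) = Ext_A^p(R, V)`, `R = A/I` the trivial module. -/
abbrev Hp (p : ℕ) (V : ModuleCat (MonoidAlgebra R Γ)) : Type :=
  ExtG R Γ p (ModuleCat.of _ (MonoidAlgebra R Γ ⧸ Iaug R Γ)) V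

/-- Higher order cohomology `H_q^p(Γ,Σ,V) = Ext_A^p(A/J_q, V)`. -/
abbrev Hqp (Sg : Subgroup Γ) (q p : ℕ) (V : ModuleCat (MonoidAlgebra R Γ)) : Type :=
  ExtG R Γ p (ModuleCat.of _ (MonoidAlgebra R Γ ⧸ J R Γ Sg q)) V

/-- The `A`-module `J_q / J_{q+1}`. -/
abbrev Jmod (Sg : Subgroup Γ) (q : ℕ) :=
  ↥(J R Γ Sg q) ⧸ (Submodule.comap (J R Γ Sg q).subtype (J R Γ Sg (q+1)))


/-- `Ann(J_q, V) = {v ∈ V : x·v = 0 for all x ∈ J_q}`, realizing `H_q^0(Γ,Σ,V)`. -/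
def AnnJ (Sg : Subgroup Γ) (q : ℕ) (V : ModuleCat (MonoidAlgebra R Γ)) : AddSubgroup ↥V where
  carrier := {v | ∀ x ∈ J R Γ Sg q, x • v = 0}
  add_mem' := fun ha hb x hx => by rw [smul_add, ha x hx, hb x hx, add_zero]
  zero_mem' := fun x _ => smul_zero x
  neg_mem' := fun ha x hx => by rw [smul_neg, ha x hx, neg_zero]

/-- The fixed module `V^Γ = H^0(Γ, V)`. -/
def FixPts (V : ModuleCat (MonoidAlgebra R Γ)) : AddSubgroup ↥V where
  carrier := {v | ∀ γ : Γ, (MonoidAlgebra.of R Γ γ) • v = v}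
  add_mem' := fun ha hb γ => by rw [smul_add, ha γ, hb γ]
  zero_mem' := fun γ => smul_zero _
  neg_mem' := fun ha γ => by rw [smul_neg, ha γ]

/-!
Since `I·J_q ⊆ J_{q+1}`, the augmentation ideal acts trivially on `J_q/J_{q+1}`, so `A`-linear maps
`J_q/J_{q+1} → V` are the same as families of fixed vectors indexed by an `R`-basis. An element `v`
killed by `J_{q+1}` gives such a map `[x] ↦ x • v`, which vanishes exactly when `J_q • v = 0`.
Surjectivity amounts to every `A`-linear map `J_q → V` being of the form `x ↦ x • v`.
For `I` this is the vanishing of `H^1(Γ,V) = Ext^1_A(A/I, V)`, and it propagates down the chain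
`A = J_0 ⊇ J_1 ⊇ ⋯`: an `R`-linear extension of `h : J_{j+1} → V` to `J_j` fails to be `A`-linear
by a defect with values in `Hom_A(I, V)`, which an `R`-linear section of `V → Hom_A(I, V)` removes.
-/

namespace Ideal

variable {A : Type*} [Ring A]

def HomsExtend (I : Ideal A) (V : Type*) [AddCommGroup V] [Module A V] : Prop :=
  ∀ f : I →ₗ[A] V, ∃ v : V, ∀ x : I, f x = (x : A) • v

variable {V : Type*} [AddCommGroup V] [Module A V]

theorem homsExtend_top : (⊤ : Ideal A).HomsExtend V := fun f =>
  ⟨f ⟨1, trivial⟩, fun x => by rw [← map_smul]; congr; ext; simp⟩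

variable (U W : Ideal A)

def quotSMulHom (v : V) (hv : ∀ x ∈ W, x • v = 0) : (U ⧸ Submodule.comap U.subtype W) →ₗ[A] V :=
  (Submodule.comap U.subtype W).liftQ (LinearMap.toSpanSingleton A V v ∘ₗ U.subtype)
    fun u hu => LinearMap.mem_ker.2 (hv u hu)

variable {U W}

@[simp]
theorem quotSMulHom_mk (v : V) (hv : ∀ x ∈ W, x • v = 0) (u : U) :
    quotSMulHom U W v hv (Submodule.Quotient.mk u) = (u : A) • v :=
  rfl

theorem quotSMulHom_add (v w : V) (hv : ∀ x ∈ W, x • v = 0) (hw : ∀ x ∈ W, x • w = 0) :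
    quotSMulHom U W (v + w) (fun x hx => by rw [smul_add, hv x hx, hw x hx, add_zero]) =
      quotSMulHom U W v hv + quotSMulHom U W w hw :=
  Submodule.linearMap_qext _ (LinearMap.ext fun _ => smul_add _ _ _)

theorem quotSMulHom_eq_zero_iff (v : V) (hv : ∀ x ∈ W, x • v = 0) :
    quotSMulHom U W v hv = 0 ↔ ∀ x ∈ U, x • v = 0 := by
  refine ⟨fun h x hx => ?_, fun h => Submodule.linearMap_qext _ (LinearMap.ext fun u => h u u.2)⟩
  simpa using LinearMap.congr_fun h (Submodule.Quotient.mk ⟨x, hx⟩)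

theorem exists_quotSMulHom_eq (hWU : W ≤ U) (hU : U.HomsExtend V)
    (f : (U ⧸ Submodule.comap U.subtype W) →ₗ[A] V) : ∃ v hv, quotSMulHom U W v hv = f := by
  obtain ⟨v, hv⟩ := hU (f ∘ₗ (Submodule.comap U.subtype W).mkQ)
  refine ⟨v, fun x hx => ?_, Submodule.linearMap_qext _ (LinearMap.ext fun u => (hv u).symm)⟩
  rw [← hv ⟨x, hWU hx⟩, LinearMap.comp_apply, Submodule.mkQ_apply]
  exact (congrArg f ((Submodule.Quotient.mk_eq_zero _).2 hx)).trans (map_zero f)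

theorem smul_eq_zero_of_smul_le {I : Ideal A} (hIU : I • U ≤ W) {r : A} (hr : r ∈ I)
    (m : U ⧸ Submodule.comap U.subtype W) : r • m = 0 := by
  induction m using Submodule.Quotient.induction_on with
  | H u => exact (Submodule.Quotient.mk_eq_zero _).2 (hIU (Submodule.smul_mem_smul hr u.2))

end Ideal

theorem CategoryTheory.ProjectiveResolution.exists_d_comp_eq_of_subsingleton_ext
    {R : Type*} [Ring R] {C : Type*} [Category C] [Abelian C] [Linear R C] [EnoughProjectives C]
    {X Y : C} (P : ProjectiveResolution X)
    (hY : Subsingleton (((Ext R C 1).obj (.op X)).obj Y))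
    (f : P.complex.X 1 ⟶ Y) (hf : P.complex.d 2 1 ≫ f = 0) :
    ∃ g : P.complex.X 0 ⟶ Y, P.complex.d 1 0 ≫ g = f := by
  have hK : (P.complex.linearYonedaObj R Y).ExactAt 1 := by
    rw [HomologicalComplex.exactAt_iff_isZero_homology]
    exact Limits.IsZero.of_iso (ModuleCat.isZero_of_subsingleton _) (P.isoExt 1 Y).symm
  rw [HomologicalComplex.exactAt_iff' _ 0 1 2 (by simp) (by simp),
    ShortComplex.moduleCat_exact_iff] at hK
  exact hK f hf

theorem Ideal.homsExtend_of_subsingleton_ext {A : Type*} [Ring A] (I : Ideal A)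
    (V : ModuleCat A)
    (hV : Subsingleton (((Ext ℤ (ModuleCat A) 1).obj (.op (ModuleCat.of A (A ⧸ I)))).obj V)) :
    I.HomsExtend V := by
  intro f
  let X := ModuleCat.of A (A ⧸ I)
  let P := ProjectiveResolution.of X
  let π₀ : P.complex.X 0 ⟶ X := P.π.f 0
  let d₁ := P.complex.d 1 0
  have : Epi (ModuleCat.ofHom I.mkQ) := (ModuleCat.epi_iff_surjective _).2 I.mkQ_surjective
  let β := Projective.factorThru π₀ (ModuleCat.ofHom I.mkQ)
  have hβ (x : P.complex.X 0) : I.mkQ (β x) = π₀ x :=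
    ConcreteCategory.congr_hom (Projective.factorThru_comp π₀ (ModuleCat.ofHom I.mkQ)) x
  have hβd (x : P.complex.X 1) : β (d₁ x) ∈ I :=
    (Submodule.Quotient.mk_eq_zero I).1 <|
      (hβ _).trans (ConcreteCategory.congr_hom P.complex_d_comp_π_f_zero x)
  let χ : P.complex.X 1 →ₗ[A] I := LinearMap.codRestrict I (β.hom ∘ₗ d₁.hom) hβd
  obtain ⟨ψ, hψ⟩ := P.exists_d_comp_eq_of_subsingleton_ext hV (ModuleCat.ofHom (f ∘ₗ χ)) <| by
    ext x
    have hχ : χ (P.complex.d 2 1 x) = 0 := Subtype.ext <| by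
      change β.hom ((P.complex.d 2 1 ≫ d₁).hom x) = 0
      rw [P.complex.d_comp_d, ModuleCat.hom_zero, LinearMap.zero_apply, map_zero]
    simp [hχ]
  obtain ⟨e, he⟩ := (ModuleCat.epi_iff_surjective π₀).1 (inferInstanceAs (Epi (P.π.f 0)))
    (Submodule.Quotient.mk 1)
  have hβe : β e - 1 ∈ I := by
    rw [← Submodule.Quotient.mk_eq_zero, Submodule.Quotient.mk_sub, ← Submodule.mkQ_apply, hβ, he,
      sub_self]
  -- `ψ` extends `f ∘ β` from `ker π₀`; transported along `1 ↦ e` it differs from `f`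
  -- by `f (β e - 1)`.
  refine ⟨ψ e - f ⟨β e - 1, hβe⟩, fun x => ?_⟩
  obtain ⟨m, hm⟩ : ∃ m, d₁ m = (x : A) • e := by
    refine (ShortComplex.moduleCat_exact_iff _).1 P.exact₀ _ ?_
    change π₀ ((x : A) • e) = 0
    rw [map_smul, he, ← Submodule.Quotient.mk_smul, smul_eq_mul, mul_one]
    exact (Submodule.Quotient.mk_eq_zero I).2 x.2
  calc f x = f (χ m) - f ((x : A) • ⟨β e - 1, hβe⟩) := by
        rw [← map_sub]; congr 1; ext; simp [χ, hm, mul_sub]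
    _ = ψ (d₁ m) - f ((x : A) • ⟨β e - 1, hβe⟩) := by
        rw [← ConcreteCategory.comp_apply, hψ]; rfl
    _ = ψ ((x : A) • e) - f ((x : A) • ⟨β e - 1, hβe⟩) := by rw [hm]
    _ = (x : A) • (ψ e - f ⟨β e - 1, hβe⟩) := by rw [smul_sub, map_smul, map_smul]

section Augmentation

variable {k A : Type*} [CommRing k] [Ring A] [Algebra k A] (ε : A →ₐ[k] k)
  {M N : Type*} [AddCommGroup M] [Module A M] [Module k M] [IsScalarTower k A M]
  [AddCommGroup N] [Module A N] [Module k N] [IsScalarTower k A N]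

theorem LinearMap.map_smul_of_forall_mem_ker (f : M →ₗ[k] N)
    (hf : ∀ r ∈ RingHom.ker ε, ∀ m, f (r • m) = r • f m) (a : A) (m : M) :
    f (a • m) = a • f m := by
  have ha : a = algebraMap k A (ε a) + (a - algebraMap k A (ε a)) := (add_sub_cancel _ _).symm
  have hker : a - algebraMap k A (ε a) ∈ RingHom.ker ε := by simp [RingHom.mem_ker]
  rw [ha, add_smul, add_smul, map_add, hf _ hker, algebraMap_smul, algebraMap_smul, map_smul]

def LinearMap.ofAugmentation (f : M →ₗ[k] N)
    (hf : ∀ r ∈ RingHom.ker ε, ∀ m, f (r • m) = r • f m) : M →ₗ[A] N where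
  toFun := f
  map_add' := f.map_add
  map_smul' := f.map_smul_of_forall_mem_ker ε hf

theorem exists_linearMap_basis_eq {S : Type*} (B : Module.Basis S k M)
    (hM : ∀ r ∈ RingHom.ker ε, ∀ m : M, r • m = 0) (g : S → N)
    (hg : ∀ r ∈ RingHom.ker ε, ∀ s, r • g s = 0) :
    ∃ f : M →ₗ[A] N, ∀ s, f (B s) = g s := by
  have hf : ∀ r ∈ RingHom.ker ε, ∀ m, B.constr k g (r • m) = r • B.constr k g m := by
    intro r hr m
    have : DistribSMul.toLinearMap k N r ∘ₗ B.constr k g = 0 :=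
      B.ext fun s => by simpa using hg r hr s
    rw [hM r hr, map_zero]
    exact (LinearMap.congr_fun this m).symm
  exact ⟨LinearMap.ofAugmentation ε _ hf, B.constr_basis k g⟩

end Augmentation

section AugmentationField

variable {k A : Type*} [Field k] [Ring A] [Algebra k A] (ε : A →ₐ[k] k)
  {V : Type*} [AddCommGroup V] [Module A V] [Module k V] [IsScalarTower k A V]

theorem Ideal.HomsExtend.of_smul_le {U W : Ideal A} (hWU : W ≤ U)
    (hIU : RingHom.ker ε • U ≤ W) (hU : U.HomsExtend V) (hI : (RingHom.ker ε).HomsExtend V) :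
    W.HomsExtend V := by
  intro h
  set I := RingHom.ker ε
  obtain ⟨h₀, hh₀⟩ := LinearMap.exists_extend (p := W.restrictScalars k) (h.restrictScalars k)
  let ρ : V →ₗ[k] (I →ₗ[A] V) :=
    LinearMap.lcomp k V I.subtype ∘ₗ (LinearMap.ringLmapEquivSelf A k V).symm.toLinearMap
  have hρ (v : V) (r : I) : ρ v r = (r : A) • v := rfl
  obtain ⟨τ, hτ⟩ := ρ.exists_rightInverse_of_surjective <| LinearMap.range_eq_top.2 fun f =>
    let ⟨v, hv⟩ := hI f; ⟨v, LinearMap.ext fun r => (hv r).symm⟩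
  let E : U →ₗ[k] (I →ₗ[A] V) :=
    { toFun := fun u => h ∘ₗ (LinearMap.toSpanSingleton A A (u : A)).restrict
        fun r hr => hIU (Submodule.smul_mem_smul hr u.2)
      map_add' := fun u u' => by
        ext r
        simp only [LinearMap.comp_apply, LinearMap.add_apply, ← map_add]
        congr 1
        ext
        simp [mul_add]
      map_smul' := fun c u => by
        ext r
        simp only [LinearMap.comp_apply, LinearMap.smul_apply, RingHom.id_apply,
          ← LinearMap.map_smul_of_tower]
        congr 1
        ext
        simp }
  have hE (u : U) (r : I) : E u r = h ⟨r * u, hIU (Submodule.smul_mem_smul r.2 u.2)⟩ := rfl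
  -- `E - ρ ∘ₗ h₁` measures how far `h₁` is from commuting with `I`; `τ` corrects it.
  let h₁ := h₀ ∘ₗ U.subtype.restrictScalars k
  let H : U →ₗ[k] V := h₁ + τ ∘ₗ (E - ρ ∘ₗ h₁)
  have hh₁ (u : U) (hu : (u : A) ∈ W) : h₁ u = h ⟨u, hu⟩ := LinearMap.congr_fun hh₀ ⟨u, hu⟩
  have hHW (u : U) (hu : (u : A) ∈ W) : H u = h ⟨u, hu⟩ := by
    have hEu : E u = ρ (h₁ u) := LinearMap.ext fun r => by rw [hE, hρ, hh₁ u hu, ← map_smul]; rfl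
    simp [H, hEu, hh₁ u hu]
  have hHI (r : A) (hr : r ∈ I) (u : U) :
      r • H u = h ⟨r * u, hIU (Submodule.smul_mem_smul hr u.2)⟩ := by
    calc r • H u = r • h₁ u + ρ (τ (E u - ρ (h₁ u))) ⟨r, hr⟩ := by rw [hρ]; exact smul_add _ _ _
      _ = E u ⟨r, hr⟩ := by rw [← LinearMap.comp_apply ρ τ, hτ]; simp [hρ]
  obtain ⟨v, hv⟩ :=
    hU (LinearMap.ofAugmentation ε H fun r hr u => (hHW _ _).trans (hHI r hr u).symm)
  exact ⟨v, fun x => (hHW ⟨x, hWU x.2⟩ x.2).symm.trans (hv _)⟩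

end AugmentationField

section GroupAlgebra

variable {R : Type} [CommRing R] {Γ : Type} [Group Γ]

theorem mem_Iaug_iff {r : MonoidAlgebra R Γ} : r ∈ Iaug R Γ ↔ aug R Γ r = 0 := RingHom.mem_ker

theorem aug_single (γ : Γ) (c : R) : aug R Γ (MonoidAlgebra.single γ c) = c := by
  simp [aug]

theorem of_sub_one_mem_Iaug (γ : Γ) : MonoidAlgebra.of R Γ γ - 1 ∈ Iaug R Γ :=
  mem_Iaug_iff.2 <| by rw [map_sub, MonoidAlgebra.of_apply, aug_single, map_one, sub_self]

theorem smul_eq_aug_smul_of_mem_FixPts {V : ModuleCat (MonoidAlgebra R Γ)} {v : V}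
    (hv : v ∈ FixPts R Γ V) (a : MonoidAlgebra R Γ) :
    a • v = algebraMap R (MonoidAlgebra R Γ) (aug R Γ a) • v := by
  induction a using MonoidAlgebra.induction_linear with
  | zero => simp
  | add a b ha hb => rw [add_smul, ha, hb, map_add, map_add, add_smul]
  | single γ c =>
    have hsingle : MonoidAlgebra.single γ c =
        algebraMap R (MonoidAlgebra R Γ) c * MonoidAlgebra.of R Γ γ := by
      simp [MonoidAlgebra.single_mul_single]
    rw [aug_single, hsingle, mul_smul, hv γ]

theorem mem_FixPts_iff {V : ModuleCat (MonoidAlgebra R Γ)} {v : V} :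
    v ∈ FixPts R Γ V ↔ ∀ r ∈ Iaug R Γ, r • v = 0 := by
  refine ⟨fun hv r hr => ?_, fun hv γ => ?_⟩
  · rw [smul_eq_aug_smul_of_mem_FixPts hv, mem_Iaug_iff.1 hr, map_zero, zero_smul]
  · have := hv _ (of_sub_one_mem_Iaug γ)
    rwa [sub_smul, one_smul, sub_eq_zero] at this

theorem J_zero (Sg : Subgroup Γ) : J R Γ Sg 0 = ⊤ := by
  rw [Ideal.eq_top_iff_one]
  refine Submodule.mem_sup_left (Ideal.subset_span ?_)
  rw [pow_zero]
  exact Submodule.one_le.mp le_rfl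

theorem J_succ_le (Sg : Subgroup Γ) (q : ℕ) : J R Γ Sg (q + 1) ≤ J R Γ Sg q := by
  unfold J
  apply sup_le_sup_right
  rw [Ideal.span_le]
  intro m hm
  rw [SetLike.mem_coe, pow_succ'] at hm
  exact Submodule.mul_induction_on hm
    (fun x _ y hy => Ideal.mul_mem_left _ x (Ideal.subset_span hy)) fun _ _ => add_mem

theorem Iaug_smul_J_le (Sg : Subgroup Γ) (q : ℕ) : Iaug R Γ • J R Γ Sg q ≤ J R Γ Sg (q + 1) := by
  unfold J
  rw [Submodule.smul_sup]
  refine sup_le_sup ?_ Submodule.smul_le_right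
  rw [Submodule.smul_le]
  intro r hr y hy
  induction hy using Submodule.span_induction generalizing r with
  | mem m hm =>
    refine Ideal.subset_span ?_
    rw [pow_succ']
    exact Submodule.mul_mem_mul hr hm
  | zero => simp
  | add y z _ _ hy hz => rw [smul_add]; exact add_mem (hy r hr) (hz r hr)
  | smul a y _ hy =>
    rw [smul_smul]
    exact hy _ (mem_Iaug_iff.2 (by rw [map_mul, mem_Iaug_iff.1 hr, zero_mul]))

end GroupAlgebra

section FixedPoints

variable {R : Type} [CommRing R] {Γ : Type} [Group Γ] (Sg : Subgroup Γ) (q : ℕ)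
  (V : ModuleCat (MonoidAlgebra R Γ))

theorem quotSMulHom_mem_FixPts {v : V} (hv : v ∈ AnnJ R Γ Sg (q + 1) V) (m : Jmod R Γ Sg q) :
    Ideal.quotSMulHom (J R Γ Sg q) (J R Γ Sg (q + 1)) v hv m ∈ FixPts R Γ V :=
  mem_FixPts_iff.2 fun r hr => by
    rw [← map_smul, Ideal.smul_eq_zero_of_smul_le (Iaug_smul_J_le Sg q) hr, map_zero]

def annJToFixPts {S : Type} (B : Module.Basis S R (Jmod R Γ Sg q)) :
    AnnJ R Γ Sg (q + 1) V →+ (S → FixPts R Γ V) :=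
  AddMonoidHom.mk' (fun v s => ⟨_, quotSMulHom_mem_FixPts Sg q V v.2 (B s)⟩) fun v w =>
    funext fun s => Subtype.ext <| LinearMap.congr_fun (Ideal.quotSMulHom_add _ _ v.2 w.2) (B s)

variable {Sg q V} [Module R V] [IsScalarTower R (MonoidAlgebra R Γ) V] {S : Type}
  (B : Module.Basis S R (Jmod R Γ Sg q))

theorem annJToFixPts_surjective (hJ : (J R Γ Sg q).HomsExtend V) :
    Function.Surjective (annJToFixPts Sg q V B) := by
  intro g
  obtain ⟨f, hf⟩ := exists_linearMap_basis_eq (aug R Γ) B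
    (fun r hr => Ideal.smul_eq_zero_of_smul_le (Iaug_smul_J_le Sg q) hr) (fun s => (g s : V))
    fun r hr s => mem_FixPts_iff.1 (g s).2 r hr
  obtain ⟨v, hv, rfl⟩ := Ideal.exists_quotSMulHom_eq (J_succ_le Sg q) hJ f
  exact ⟨⟨v, hv⟩, funext fun s => Subtype.ext (hf s)⟩

theorem annJToFixPts_eq_zero_iff (v : AnnJ R Γ Sg (q + 1) V) :
    annJToFixPts Sg q V B v = 0 ↔ (v : V) ∈ AnnJ R Γ Sg q V := by
  change _ ↔ ∀ x ∈ J R Γ Sg q, x • (v : V) = 0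
  rw [← Ideal.quotSMulHom_eq_zero_iff _ v.2]
  refine ⟨fun h => LinearMap.restrictScalars_injective R (B.ext fun s => ?_), fun h => ?_⟩
  · exact congrArg Subtype.val (congrFun h s)
  · exact funext fun s => Subtype.ext (LinearMap.congr_fun h (B s))

end FixedPoints

theorem homsExtend_J {R : Type} [Field R] {Γ : Type} [Group Γ] (Sg : Subgroup Γ) {V : Type*}
    [AddCommGroup V] [Module (MonoidAlgebra R Γ) V] [Module R V]
    [IsScalarTower R (MonoidAlgebra R Γ) V] (hI : (Iaug R Γ).HomsExtend V) (q : ℕ) :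
    (J R Γ Sg q).HomsExtend V := by
  induction q with
  | zero => rw [J_zero]; exact Ideal.homsExtend_top
  | succ q ih => exact ih.of_smul_le (aug R Γ) (J_succ_le Sg q) (Iaug_smul_J_le Sg q) hI

theorem ann_short_exact_sequence (hR : IsField R) (Sg : Subgroup Γ)
    (V : ModuleCat (MonoidAlgebra R Γ)) (h1 : Subsingleton (Hp R Γ 1 V))
    (q : ℕ) :
    (AnnJ R Γ Sg q V : Set ↥V) ⊆ (AnnJ R Γ Sg (q + 1) V : Set ↥V) ∧
    ∃ (S : Type) (_ : Module.Basis S R (Jmod R Γ Sg q))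
      (φ : ↥(AnnJ R Γ Sg (q + 1) V) →+ (S → ↥(FixPts R Γ V))),
      Function.Surjective φ ∧
      ∀ v : ↥(AnnJ R Γ Sg (q + 1) V), φ v = 0 ↔ (v : ↥V) ∈ AnnJ R Γ Sg q V := by
  let := hR.toField
  let : Module R V := Module.compHom V (algebraMap R (MonoidAlgebra R Γ))
  have : IsScalarTower R (MonoidAlgebra R Γ) V := .of_algebraMap_smul fun _ _ => rfl
  have hJ := homsExtend_J Sg (Ideal.homsExtend_of_subsingleton_ext _ V h1) q
  let B := Module.Basis.ofVectorSpace R (Jmod R Γ Sg q)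
  exact ⟨fun v hv x hx => hv x (J_succ_le Sg q hx), _, B, annJToFixPts Sg q V B,
    annJToFixPts_surjective B hJ, annJToFixPts_eq_zero_iff B⟩
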